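/- Let ψ₁,…,ψ_m be unit vectors in ℂ^d with priors p_k ≥ 0, Σ p_k = 1, and let W₁,…,W_m ≥ 0 be weights such that S := Σ_ℓ W_ℓ |ψ_ℓ⟩⟨ψ_ℓ| is positive definite on ℂ^d; write Λ := S^{1/2} for its unique positive definite square root. If p_k ⟨ψ_k, Λ^{-1} ψ_k⟩ ≤ 1 for all k, with equality whenever W_k > 0, then the Belavkin weighted square-root measurement M_k = Λ^{-1} W_k |ψ_k⟩⟨ψ_k| Λ^{-1} is optimal: for every POVM (N_k) on ℂ^d, Σ_k p_k ⟨ψ_k, M_k ψ_k⟩ ≥ Σ_k p_k ⟨ψ_k, N_k ψ_k⟩. -/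

import Mathlib

open Matrix Filter
open scoped ComplexOrder

noncomputable section

/-- The rank-one projector `|ψ⟩⟨ψ|` as a matrix. -/
def proj {d : ℕ} (ψ : Fin d → ℂ) : Matrix (Fin d) (Fin d) ℂ := vecMulVec ψ (star ψ)

/-- The (real) expectation value `⟨ψ, M ψ⟩`. -/
def expVal {d : ℕ} (M : Matrix (Fin d) (Fin d) ℂ) (ψ : Fin d → ℂ) : ℝ :=
  (star ψ ⬝ᵥ M *ᵥ ψ).re

def IsPOVM {d m : ℕ} (M : Fin m → Matrix (Fin d) (Fin d) ℂ) : Prop :=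
  (∀ k, (M k).PosSemidef) ∧ ∑ k, M k = 1

def Matrix.PosSemidef.sqrt {n 𝕜 : Type*} [Fintype n] [RCLike 𝕜] [DecidableEq n]
    {A : Matrix n n 𝕜} (hA : A.PosSemidef) : Matrix n n 𝕜 :=
  hA.1.eigenvectorUnitary.1 * diagonal ((↑) ∘ (√·) ∘ hA.1.eigenvalues) *
  (star hA.1.eigenvectorUnitary : Matrix n n 𝕜)

/-! With `Λ = S^{1/2}`, Cauchy–Schwarz for the form of `Λ⁻¹` turns `p k ⟨ψ k, Λ⁻¹ ψ k⟩ ≤ 1` into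
the operator inequality `p k |ψ k⟩⟨ψ k| ≤ Λ`. Pairing it with the positive `N k` and summing,
every POVM `N` has success probability at most `∑ k, tr (Λ N k) = tr Λ`. The square-root
measurement attains this bound: `tr Λ = tr (S Λ⁻¹) = ∑ k, W k ⟨ψ k, Λ⁻¹ ψ k⟩`, while its success
probability is `∑ k, p k W k ⟨ψ k, Λ⁻¹ ψ k⟩²`, and the two sums agree term by term because
`p k ⟨ψ k, Λ⁻¹ ψ k⟩ = 1` whenever `W k > 0`. -/

open scoped MatrixOrder

section Sqrt

variable {n 𝕜 : Type*} [Fintype n] [RCLike 𝕜] [DecidableEq n] {A : Matrix n n 𝕜}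

lemma Matrix.PosSemidef.sqrt_eq_cfcSqrt (hA : A.PosSemidef) : hA.sqrt = CFC.sqrt A := by
  rw [CFC.sqrt_eq_real_sqrt A hA.nonneg, cfcₙ_eq_cfc, hA.1.cfc_eq]
  rfl

lemma Matrix.PosSemidef.sqrt_mul_self (hA : A.PosSemidef) : hA.sqrt * hA.sqrt = A := by
  rw [hA.sqrt_eq_cfcSqrt, CFC.sqrt_mul_sqrt_self A hA.nonneg]

lemma Matrix.PosDef.posDef_sqrt (hA : A.PosDef) : hA.posSemidef.sqrt.PosDef := by
  rw [hA.posSemidef.sqrt_eq_cfcSqrt]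
  exact hA.isStrictlyPositive.sqrt.posDef

end Sqrt

lemma Matrix.PosSemidef.trace_mul_nonneg {n 𝕜 : Type*} [Fintype n] [RCLike 𝕜]
    {A B : Matrix n n 𝕜} (hA : A.PosSemidef) (hB : B.PosSemidef) : 0 ≤ (A * B).trace := by
  classical
  obtain ⟨C, rfl⟩ := CStarAlgebra.nonneg_iff_eq_star_mul_self.mp hA.nonneg
  rw [Matrix.mul_assoc, trace_mul_comm]
  exact (hB.mul_mul_conjTranspose_same C).trace_nonneg

section ExpVal

variable {d m : ℕ}

lemma proj_mulVec (ψ x : Fin d → ℂ) : proj ψ *ᵥ x = (star ψ ⬝ᵥ x) • ψ := by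
  rw [proj, vecMulVec_mulVec, op_smul_eq_smul]

lemma dotProduct_proj_mulVec (ψ x : Fin d → ℂ) :
    star x ⬝ᵥ proj ψ *ᵥ x = (‖star ψ ⬝ᵥ x‖ ^ 2 : ℝ) := by
  rw [proj_mulVec, dotProduct_smul, star_dotProduct (v := x), smul_eq_mul, Complex.star_def,
    Complex.mul_conj, Complex.normSq_eq_norm_sq]

lemma trace_proj_mul (ψ : Fin d → ℂ) (B : Matrix (Fin d) (Fin d) ℂ) :
    (proj ψ * B).trace = star ψ ⬝ᵥ B *ᵥ ψ := by
  rw [proj, vecMulVec_mul, trace_vecMulVec, dotProduct_comm, dotProduct_mulVec]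

lemma expVal_smul (r : ℝ) (B : Matrix (Fin d) (Fin d) ℂ) (ψ : Fin d → ℂ) :
    expVal (r • B) ψ = r * expVal B ψ := by
  rw [expVal, expVal, smul_mulVec, dotProduct_smul, Complex.smul_re, smul_eq_mul]

lemma Matrix.PosSemidef.ofReal_expVal {B : Matrix (Fin d) (Fin d) ℂ} (hB : B.PosSemidef)
    (ψ : Fin d → ℂ) : (expVal B ψ : ℂ) = star ψ ⬝ᵥ B *ᵥ ψ :=
  (Complex.eq_re_of_ofReal_le (hB.dotProduct_mulVec_nonneg ψ)).symm

lemma Matrix.PosSemidef.expVal_nonneg {B : Matrix (Fin d) (Fin d) ℂ} (hB : B.PosSemidef)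
    (ψ : Fin d → ℂ) : 0 ≤ expVal B ψ :=
  (Complex.le_def.mp (hB.dotProduct_mulVec_nonneg ψ)).1

lemma expVal_mul_proj_mul {B : Matrix (Fin d) (Fin d) ℂ} (hB : B.PosSemidef) (ψ : Fin d → ℂ) :
    expVal (B * proj ψ * B) ψ = expVal B ψ ^ 2 := by
  have h : star ψ ⬝ᵥ (B * proj ψ * B) *ᵥ ψ = (star ψ ⬝ᵥ B *ᵥ ψ) ^ 2 := by
    rw [← mulVec_mulVec, ← mulVec_mulVec, proj, vecMulVec_mulVec, op_smul_eq_smul, mulVec_smul,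
      dotProduct_smul, smul_eq_mul, sq]
  rw [expVal, h, ← hB.ofReal_expVal, ← Complex.ofReal_pow, Complex.ofReal_re]

lemma Matrix.PosSemidef.norm_dotProduct_mulVec_sq_le {A : Matrix (Fin d) (Fin d) ℂ}
    (hA : A.PosSemidef) (x y : Fin d → ℂ) :
    ‖star x ⬝ᵥ A *ᵥ y‖ ^ 2 ≤ expVal A x * expVal A y := by
  obtain ⟨B, rfl⟩ := CStarAlgebra.nonneg_iff_eq_star_mul_self.mp hA.nonneg
  have hinner (u v : Fin d → ℂ) : star u ⬝ᵥ (star B * B) *ᵥ v =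
      inner ℂ (WithLp.toLp 2 (B *ᵥ u)) (WithLp.toLp 2 (B *ᵥ v)) := by
    rw [EuclideanSpace.inner_toLp_toLp, star_mulVec, ← mulVec_mulVec, dotProduct_mulVec,
      star_eq_conjTranspose, dotProduct_comm]
  have hexp (u : Fin d → ℂ) : expVal (star B * B) u = ‖WithLp.toLp 2 (B *ᵥ u)‖ ^ 2 := by
    rw [expVal, hinner, ← inner_self_eq_norm_sq (𝕜 := ℂ), RCLike.re_to_complex]
  rw [hinner, hexp, hexp, ← mul_pow]
  gcongr
  exact norm_inner_le_norm _ _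

lemma Matrix.PosDef.posSemidef_sub_smul_proj {A : Matrix (Fin d) (Fin d) ℂ} (hA : A.PosDef)
    {t : ℝ} (ht : 0 ≤ t) {ψ : Fin d → ℂ} (h : t * expVal A⁻¹ ψ ≤ 1) :
    (A - t • proj ψ).PosSemidef := by
  refine .of_dotProduct_mulVec_nonneg
    (hA.1.sub ((posSemidef_vecMulVec_self_star ψ).smul ht).1) fun x => ?_
  have hcs : ‖star ψ ⬝ᵥ x‖ ^ 2 ≤ expVal A⁻¹ ψ * expVal A x := by
    have hinv : A⁻¹ * A = 1 := nonsing_inv_mul _ ((isUnit_iff_isUnit_det A).mp hA.isUnit)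
    have hAx : expVal A⁻¹ (A *ᵥ x) = expVal A x := by
      rw [expVal, expVal, star_mulVec, hA.1.eq, mulVec_mulVec, hinv, one_mulVec,
        ← dotProduct_mulVec]
    simpa only [mulVec_mulVec, hinv, one_mulVec, hAx] using
      hA.posSemidef.inv.norm_dotProduct_mulVec_sq_le ψ (A *ᵥ x)
  rw [sub_mulVec, dotProduct_sub, smul_mulVec, dotProduct_smul, dotProduct_proj_mulVec,
    ← hA.posSemidef.ofReal_expVal, Complex.real_smul, ← Complex.ofReal_mul, ← Complex.ofReal_sub,
    Complex.zero_le_real]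
  have hx := hA.posSemidef.expVal_nonneg x
  nlinarith [mul_le_mul_of_nonneg_left hcs ht, mul_le_mul_of_nonneg_right h hx]

lemma mul_expVal_le_re_trace_mul {A N : Matrix (Fin d) (Fin d) ℂ} {t : ℝ} {ψ : Fin d → ℂ}
    (hA : (A - t • proj ψ).PosSemidef) (hN : N.PosSemidef) :
    t * expVal N ψ ≤ (A * N).trace.re := by
  have h := (Complex.le_def.mp (hA.trace_mul_nonneg hN)).1
  rw [sub_mul, trace_sub, smul_mul_assoc, trace_smul, trace_proj_mul, Complex.sub_re,
    Complex.smul_re, Complex.zero_re] at h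
  exact sub_nonneg.mp h

lemma sum_mul_expVal_le_re_trace {A : Matrix (Fin d) (Fin d) ℂ} {p : Fin m → ℝ}
    {ψ : Fin m → Fin d → ℂ} (hA : ∀ k, (A - p k • proj (ψ k)).PosSemidef)
    {N : Fin m → Matrix (Fin d) (Fin d) ℂ} (hN : IsPOVM N) :
    ∑ k, p k * expVal (N k) (ψ k) ≤ A.trace.re :=
  calc ∑ k, p k * expVal (N k) (ψ k) ≤ ∑ k, (A * N k).trace.re :=
        Finset.sum_le_sum fun k _ => mul_expVal_le_re_trace_mul (hA k) (hN.1 k)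
    _ = A.trace.re := by rw [← Complex.re_sum, ← trace_sum, ← Matrix.mul_sum, hN.2, mul_one]

lemma re_trace_eq_sum_mul_expVal_inv {Λ : Matrix (Fin d) (Fin d) ℂ} (hΛ : IsUnit Λ)
    {W : Fin m → ℝ} {ψ : Fin m → Fin d → ℂ} (hΛΛ : Λ * Λ = ∑ ℓ, W ℓ • proj (ψ ℓ)) :
    Λ.trace.re = ∑ ℓ, W ℓ * expVal Λ⁻¹ (ψ ℓ) := by
  calc Λ.trace.re = (Λ * Λ * Λ⁻¹).trace.re := by
        rw [mul_nonsing_inv_cancel_right Λ Λ ((isUnit_iff_isUnit_det Λ).mp hΛ)]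
    _ = ∑ ℓ, W ℓ * expVal Λ⁻¹ (ψ ℓ) := by
        rw [hΛΛ, Matrix.sum_mul, trace_sum, Complex.re_sum]
        refine Finset.sum_congr rfl fun ℓ _ => ?_
        rw [smul_mul_assoc, trace_smul, trace_proj_mul, Complex.smul_re, smul_eq_mul, expVal]

lemma expVal_inv_mul_smul_proj_mul_inv {Λ : Matrix (Fin d) (Fin d) ℂ} (hΛ : Λ.PosDef) (w : ℝ)
    (ψ : Fin d → ℂ) : expVal (Λ⁻¹ * (w • proj ψ) * Λ⁻¹) ψ = w * expVal Λ⁻¹ ψ ^ 2 := by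
  rw [mul_smul_comm, smul_mul_assoc, expVal_smul, expVal_mul_proj_mul hΛ.posSemidef.inv]

end ExpVal

theorem belavkin_sufficiency_general {d m : ℕ}
    (ψ : Fin m → Fin d → ℂ)
    (p : Fin m → ℝ) (hp : ∀ k, 0 ≤ p k)
    (W : Fin m → ℝ) (hW : ∀ k, 0 ≤ W k)
    (hS : (∑ ℓ, W ℓ • proj (ψ ℓ)).PosDef)
    (M : Fin m → Matrix (Fin d) (Fin d) ℂ)
    (hM : ∀ k, M k = (hS.posSemidef.sqrt)⁻¹ * (W k • proj (ψ k)) * (hS.posSemidef.sqrt)⁻¹)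
    (hle : ∀ k, p k * (star (ψ k) ⬝ᵥ (hS.posSemidef.sqrt)⁻¹ *ᵥ ψ k).re ≤ 1)
    (heq : ∀ k, 0 < W k → p k * (star (ψ k) ⬝ᵥ (hS.posSemidef.sqrt)⁻¹ *ᵥ ψ k).re = 1) :
    ∀ N : Fin m → Matrix (Fin d) (Fin d) ℂ, IsPOVM N →
      ∑ k, p k * expVal (N k) (ψ k) ≤ ∑ k, p k * expVal (M k) (ψ k) := by
  intro N hN
  set Λ := hS.posSemidef.sqrt
  have hΛ : Λ.PosDef := hS.posDef_sqrt
  calc ∑ k, p k * expVal (N k) (ψ k) ≤ Λ.trace.re :=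
        sum_mul_expVal_le_re_trace (fun k => hΛ.posSemidef_sub_smul_proj (hp k) (hle k)) hN
    _ = ∑ k, W k * expVal Λ⁻¹ (ψ k) :=
        re_trace_eq_sum_mul_expVal_inv hΛ.isUnit hS.posSemidef.sqrt_mul_self
    _ = ∑ k, p k * expVal (M k) (ψ k) := by
        refine Finset.sum_congr rfl fun k _ => ?_
        rw [hM k, expVal_inv_mul_smul_proj_mul_inv hΛ]
        rcases (hW k).eq_or_lt with hWk | hWk
        · simp [← hWk]
        · have hk : p k * expVal Λ⁻¹ (ψ k) = 1 := heq k hWk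
          linear_combination -(W k * expVal Λ⁻¹ (ψ k)) * hk

/-- sufficiency direction of Belavkin's theorem: with `Λ = S^{1/2}`, if
`p k * ⟨ψ k, Λ⁻¹ ψ k⟩ ≤ 1` for all `k`, with equality whenever `W k > 0`, then the Belavkin
weighted square-root measurement `M k = Λ⁻¹ (W k |ψ k⟩⟨ψ k|) Λ⁻¹` is optimal. -/
theorem belavkin_sufficiency {d m : ℕ}
    (ψ : Fin m → Fin d → ℂ) (hψ : ∀ k, star (ψ k) ⬝ᵥ ψ k = 1)
    (p : Fin m → ℝ) (hp : ∀ k, 0 ≤ p k) (hp1 : ∑ k, p k = 1)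
    (W : Fin m → ℝ) (hW : ∀ k, 0 ≤ W k)
    (hS : (∑ ℓ, W ℓ • proj (ψ ℓ)).PosDef)
    (M : Fin m → Matrix (Fin d) (Fin d) ℂ)
    (hM : ∀ k, M k = (hS.posSemidef.sqrt)⁻¹ * (W k • proj (ψ k)) * (hS.posSemidef.sqrt)⁻¹)
    (hle : ∀ k, p k * (star (ψ k) ⬝ᵥ (hS.posSemidef.sqrt)⁻¹ *ᵥ ψ k).re ≤ 1)
    (heq : ∀ k, 0 < W k → p k * (star (ψ k) ⬝ᵥ (hS.posSemidef.sqrt)⁻¹ *ᵥ ψ k).re = 1) :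
    ∀ N : Fin m → Matrix (Fin d) (Fin d) ℂ, IsPOVM N →
      ∑ k, p k * expVal (N k) (ψ k) ≤ ∑ k, p k * expVal (M k) (ψ k) :=
  belavkin_sufficiency_general ψ p hp W hW hS M hM hle heq
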